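/- With R = 0 and K even, and writing M = (K/2)m, the probability p_A^{α,β,A}(x) that in an A-set the score reaches (α,β) with A scoring the last point and scoring exactly x points on own serve equals C(M, x) p_a^x(1-p_a)^{M-x} · C(M-1, α-x-1)(1-p_b)^{α-x} p_b^{M-α+x}, for max(0, α-M) ≤ x ≤ min(α-1, M), where α+β = Km. -/

import Mathlib

/-
Every rally sequence in the event has the same weight: a product over A's serves contributes
`pa ^ x * (1 - pa) ^ (M - x)` and one over B's serves `(1 - pb) ^ (α - x) * pb ^ (M - (α - x))`,
since both only depend on how many of those rallies A wins. The sequences themselves are pairs of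
an `x`-subset of A's `M` serves and an `(α - x)`-subset of B's `M` serves containing the last
rally, which is one of B's; there are `C(M, x) * C(M - 1, α - x - 1)` of them.
-/

open Finset

section

variable {ι : Type*}

theorem card_filter_bool_fun_eq_card_mul_card [Fintype ι] [DecidableEq ι]
    (P : ι → Prop) [DecidablePred P] (F G : Finset ι → Prop) [DecidablePred F] [DecidablePred G] :
    #{ω : ι → Bool | F {i | P i ∧ ω i = true} ∧ G {i | ¬ P i ∧ ω i = true}} =
      #{U ∈ powerset {i | P i} | F U} * #{V ∈ powerset {i | ¬ P i} | G V} := by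
  rw [← card_product]
  refine card_nbij'
    (fun ω => (({i | P i ∧ ω i = true} : Finset ι), ({i | ¬ P i ∧ ω i = true} : Finset ι)))
    (fun UV i => decide (i ∈ UV.1 ∨ i ∈ UV.2)) ?_ ?_ ?_ ?_
  · intro ω hω
    simp_all [subset_iff]
  · rintro ⟨U, V⟩ hUV
    simp only [coe_product, Set.mem_prod, coe_filter, mem_powerset, subset_iff, mem_filter,
      mem_univ, true_and] at hUV ⊢
    obtain ⟨⟨hU, hF⟩, hV, hG⟩ := hUV
    have hPU : ({i | P i ∧ (i ∈ U ∨ i ∈ V)} : Finset ι) = U := by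
      ext i; grind
    have hPV : ({i | ¬ P i ∧ (i ∈ U ∨ i ∈ V)} : Finset ι) = V := by
      ext i; grind
    simpa [hPU, hPV] using ⟨hF, hG⟩
  · intro ω _
    funext i
    by_cases h : P i <;> simp [h]
  · rintro ⟨U, V⟩ hUV
    simp only [coe_product, Set.mem_prod, coe_filter, mem_powerset, subset_iff, mem_filter,
      mem_univ, true_and] at hUV
    obtain ⟨⟨hU, -⟩, hV, -⟩ := hUV
    ext i <;> simp <;> grind

theorem card_filter_mem_powersetCard_succ [DecidableEq ι] {s : Finset ι} {a : ι} (ha : a ∈ s)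
    (k : ℕ) :
    #{V ∈ powersetCard (k + 1) s | a ∈ V} = (#s - 1).choose k := by
  rw [← card_erase_of_mem ha, ← card_powersetCard]
  refine card_nbij' (·.erase a) (insert a) ?_ ?_ ?_ ?_
  · intro V hV
    obtain ⟨⟨hVs, hVk⟩, haV⟩ : (V ⊆ s ∧ #V = k + 1) ∧ a ∈ V := by simpa using hV
    simp [erase_subset_erase a hVs, card_erase_of_mem haV, hVk]
  · intro W hW
    obtain ⟨hWs, hWk⟩ : W ⊆ s.erase a ∧ #W = k := by simpa using hW
    have haW : a ∉ W := fun h => by simpa using hWs h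
    simp [insert_subset ha (hWs.trans (erase_subset a s)), card_insert_of_notMem haW, hWk]
  · intro V hV
    exact insert_erase (mem_filter.1 hV).2
  · intro W hW
    exact erase_insert (fun h => by simpa using (mem_powersetCard.1 hW).1 h)

theorem prod_ite_bool_eq_pow {M : Type*} [CommMonoid M] (s : Finset ι) (ω : ι → Bool) (a b : M) :
    ∏ i ∈ s, (if ω i then a else b) = a ^ #{i ∈ s | ω i} * b ^ (#s - #{i ∈ s | ω i}) := by
  rw [prod_ite, prod_const, prod_const, ← card_filter_add_card_filter_not (s := s) (ω · = true),
    Nat.add_sub_cancel_left]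

theorem card_filter_and_add_card_filter_not_and [Fintype ι] (P : ι → Prop) [DecidablePred P]
    (ω : ι → Bool) :
    #{i | P i ∧ ω i = true} + #{i | ¬ P i ∧ ω i = true} = #{i | ω i = true} := by
  simpa only [filter_filter, and_comm] using
    card_filter_add_card_filter_not (s := {i | ω i = true}) P

theorem prod_ite_ite_bool_eq_pow [Fintype ι] {M : Type*} [CommMonoid M]
    (P : ι → Prop) [DecidablePred P] (ω : ι → Bool) (a a' b b' : M) :
    ∏ i, (if P i then (if ω i then a else a') else (if ω i then b else b')) =
      a ^ #{i | P i ∧ ω i = true} * a' ^ (#{i | P i} - #{i | P i ∧ ω i = true}) *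
      (b ^ #{i | ¬ P i ∧ ω i = true} * b' ^ (#{i | ¬ P i} - #{i | ¬ P i ∧ ω i = true})) := by
  rw [prod_ite, prod_ite_bool_eq_pow, prod_ite_bool_eq_pow]
  simp only [filter_filter]

theorem card_filter_bool_fun_eq_choose_mul_choose [Fintype ι] [DecidableEq ι]
    (P : ι → Prop) [DecidablePred P] {ℓ : ι} (hℓ : ¬ P ℓ) {x α : ℕ} (hxα : x < α) :
    #{ω : ι → Bool | #{i | P i ∧ ω i = true} = x ∧ #{i | ω i = true} = α ∧ ω ℓ = true} =
      (#{i | P i}).choose x * (#{i | ¬ P i} - 1).choose (α - x - 1) := by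
  have hcond : ∀ ω : ι → Bool,
      (#{i | P i ∧ ω i = true} = x ∧ #{i | ω i = true} = α ∧ ω ℓ = true) ↔
      (#{i | P i ∧ ω i = true} = x ∧
        (#{i | ¬ P i ∧ ω i = true} = α - x - 1 + 1 ∧
          ℓ ∈ ({i | ¬ P i ∧ ω i = true} : Finset ι))) := by
    intro ω
    have hsplit := card_filter_and_add_card_filter_not_and P ω
    simp only [mem_filter, mem_univ, true_and, hℓ, not_false_eq_true]
    constructor <;> rintro ⟨hx, hα, hω⟩ <;> exact ⟨hx, by omega, hω⟩
  rw [filter_congr fun ω _ => hcond ω,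
    card_filter_bool_fun_eq_card_mul_card P (#· = x) (fun V => #V = α - x - 1 + 1 ∧ ℓ ∈ V),
    ← filter_filter, ← powersetCard_eq_filter, ← powersetCard_eq_filter, card_powersetCard,
    card_filter_mem_powersetCard_succ (by simpa using hℓ)]

end

theorem Fin.card_filter_val (n : ℕ) (p : ℕ → Prop) [DecidablePred p] :
    #{i : Fin n | p i} = #{i ∈ range n | p i} := by
  rw [← card_map Fin.valEmbedding, map_filter', Fin.map_valEmbedding_univ, Nat.Iio_eq_range]
  congr 1
  ext b
  simp +contextual [Fin.exists_iff, and_comm]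

theorem card_filter_fin_mul_div_odd (K m : ℕ) :
    #{i : Fin (K * m) | ¬ (i.val / m % 2 = 0)} = K / 2 * m := by
  have hodd : #{j : Fin K | ¬ (j.val % 2 = 0)} = K / 2 := by
    rw [Fin.card_filter_val K (fun j => ¬ j % 2 = 0), ← Nat.card_multiples]
    exact congrArg card (filter_congr fun j _ => by omega)
  calc #{i : Fin (K * m) | ¬ (i.val / m % 2 = 0)}
      = #(({j : Fin K | ¬ (j.val % 2 = 0)} : Finset (Fin K)) ×ˢ (univ : Finset (Fin m))) := by
        refine (card_equiv finProdFinEquiv fun p => ?_).symm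
        have hm : 0 < m := p.2.pos
        simp [Nat.add_mul_div_left _ _ hm, Nat.div_eq_of_lt p.2.2]
    _ = K / 2 * m := by rw [card_product, hodd, card_univ, Fintype.card_fin]

theorem Nat.mul_sub_one_div_self {K m : ℕ} (hm : 0 < m) (hK : 0 < K) :
    (K * m - 1) / m = K - 1 := by
  apply Nat.div_eq_of_lt_le
  · rw [Nat.sub_one_mul]
    omega
  · rw [Nat.sub_add_cancel hK]
    have := Nat.mul_pos hK hm
    omega

theorem card_filter_fin_mul_div_even {K : ℕ} (hK : K % 2 = 0) (m : ℕ) :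
    #{i : Fin (K * m) | i.val / m % 2 = 0} = K / 2 * m := by
  have hsplit :=
    card_filter_add_card_filter_not (s := univ) fun i : Fin (K * m) => i.val / m % 2 = 0
  rw [card_filter_fin_mul_div_odd, card_univ, Fintype.card_fin] at hsplit
  have hKm : K * m = K / 2 * m + K / 2 * m := by rw [← add_mul]; congr 1; omega
  omega

-- Rally `i` (0-indexed) is served by A iff `⌊i/m⌋` is even; `true` means A wins the rally.
theorem stmt_10_general (pa pb : ℝ)
    (m K α x : ℕ) (hm : 1 ≤ m) (hK : K % 2 = 0) (hKpos : 0 < K)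
    (hα : 1 ≤ α)
    (hx2 : x ≤ min (α - 1) (K / 2 * m)) :
    ∑ ω ∈ Finset.univ.filter (fun ω : Fin (K * m) → Bool =>
        (Finset.univ.filter (fun i : Fin (K * m) =>
            (i.val / m) % 2 = 0 ∧ ω i = true)).card = x ∧
        (Finset.univ.filter (fun i : Fin (K * m) => ω i = true)).card = α ∧
        ω ⟨K * m - 1, Nat.sub_lt (Nat.mul_pos hKpos hm) Nat.one_pos⟩ = true),
      ∏ i : Fin (K * m),
        (if (i.val / m) % 2 = 0 then (if ω i then pa else 1 - pa)
         else (if ω i then 1 - pb else pb))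
    = ((K / 2 * m).choose x : ℝ) * pa ^ x * (1 - pa) ^ (K / 2 * m - x)
        * ((K / 2 * m - 1).choose (α - x - 1) : ℝ) * (1 - pb) ^ (α - x)
        * pb ^ (K / 2 * m - (α - x)) := by
  set P : Fin (K * m) → Prop := fun i => i.val / m % 2 = 0
  set M := K / 2 * m
  have hA : #{i | P i} = M := card_filter_fin_mul_div_even hK m
  have hB : #{i | ¬ P i} = M := card_filter_fin_mul_div_odd K m
  have hlast : ¬ P ⟨K * m - 1, Nat.sub_lt (Nat.mul_pos hKpos hm) Nat.one_pos⟩ := by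
    show ¬ ((K * m - 1) / m % 2 = 0)
    rw [Nat.mul_sub_one_div_self hm hKpos]
    omega
  have hweight : ∀ ω : Fin (K * m) → Bool,
      #{i | P i ∧ ω i = true} = x → #{i | ω i = true} = α →
      ∏ i, (if P i then (if ω i then pa else 1 - pa) else (if ω i then 1 - pb else pb)) =
        pa ^ x * (1 - pa) ^ (M - x) * ((1 - pb) ^ (α - x) * pb ^ (M - (α - x))) := by
    intro ω hx hwins
    have hBx : #{i | ¬ P i ∧ ω i = true} = α - x := by
      have hsplit := card_filter_and_add_card_filter_not_and P ω
      omega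
    rw [prod_ite_ite_bool_eq_pow, hx, hBx, hA, hB]
  rw [sum_congr rfl fun ω hω => hweight ω (mem_filter.1 hω).2.1 (mem_filter.1 hω).2.2.1,
    sum_const, card_filter_bool_fun_eq_choose_mul_choose P hlast (by omega), hA, hB, nsmul_eq_mul]
  push_cast
  ring

/-- Server-model A-set with `α+β = Km`, `K` even, `M = (K/2)m`: the probability that the
score reaches `(α,β)` with A scoring the last point and scoring exactly `x` points on
his own serve equals `C(M,x) p_a^x (1-p_a)^{M-x} C(M-1, α-x-1) (1-p_b)^{α-x} p_b^{M-α+x}`.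
Rally `i` (0-indexed) is served by A iff `⌊i/m⌋` is even; `true` means A wins the rally. -/
theorem stmt_10 (pa pb : ℝ) (hpa : pa ∈ Set.Ioo (0:ℝ) 1) (hpb : pb ∈ Set.Ioo (0:ℝ) 1)
    (m K α β x : ℕ) (hm : 1 ≤ m) (hK : K % 2 = 0) (hKpos : 0 < K)
    (hscore : α + β = K * m) (hα : 1 ≤ α)
    (hx1 : α - K / 2 * m ≤ x) (hx2 : x ≤ min (α - 1) (K / 2 * m)) :
    ∑ ω ∈ Finset.univ.filter (fun ω : Fin (K * m) → Bool =>
        (Finset.univ.filter (fun i : Fin (K * m) =>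
            (i.val / m) % 2 = 0 ∧ ω i = true)).card = x ∧
        (Finset.univ.filter (fun i : Fin (K * m) => ω i = true)).card = α ∧
        ω ⟨K * m - 1, Nat.sub_lt (Nat.mul_pos hKpos hm) Nat.one_pos⟩ = true),
      ∏ i : Fin (K * m),
        (if (i.val / m) % 2 = 0 then (if ω i then pa else 1 - pa)
         else (if ω i then 1 - pb else pb))
    = ((K / 2 * m).choose x : ℝ) * pa ^ x * (1 - pa) ^ (K / 2 * m - x)
        * ((K / 2 * m - 1).choose (α - x - 1) : ℝ) * (1 - pb) ^ (α - x)
        * pb ^ (K / 2 * m - (α - x)) :=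
  stmt_10_general pa pb m K α x hm hK hKpos hα hx2
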